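/- arXiv:2202.04321 — 7 statements merged into one kernel-verified Lean document; each statement's English description precedes it below -/
import Mathlib

section
/- (Achievability condition, MIF model) Under MIF dynamics μ(t) = μ(t−1)·X_t with X_t ≥ X_min > 0 almost surely, Q(0) = 0, and the policy ρ(t) = C (i.e., s(t) = C·μ(t−1) − Q(t−1)/T) for a constant C > 0: the sending rate s(t) remains nonnegative for all t, equivalently Q(t) ≤ T·C·μ(t) for all t ∈ ℕ, if C ≤ X_min/(1 − X_min) (when X_min < 1; if X_min ≥ 1 any C > 0 works). Conversely, if C > X_min/(1 − X_min) and P(X_t < C/(C+1)) > 0, then with positive probability Q(t) > T·C·μ(t) at some time t, so the policy cannot always be followed. -/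
open MeasureTheory

/-- Achievability condition, MIF model: under MIF dynamics with factors
`X t ≥ Xmin > 0` a.s. and the constant-load policy `s(t) = C·μc(t−1) − Q(t−1)/T`,
the queue satisfies `Q(t) ≤ T·C·μc(t)` for all `t` (so the policy is feasible)
when `C ≤ Xmin/(1 − Xmin)` (for `Xmin < 1`; any `C > 0` works when `Xmin ≥ 1`).
Conversely, if `Xmin < 1`, `C > Xmin/(1 − Xmin)` and `P(X 1 < C/(C+1)) > 0`, then with
positive probability `Q(t) > T·C·μc(t)` at some time `t`. -/
theorem stmt_6 {Ω : Type*} [MeasurableSpace Ω] (P : Measure Ω) [IsProbabilityMeasure P]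
    (T C Xmin : ℝ) (hT : 0 < T) (hC : 0 < C) (hXmin : 0 < Xmin)
    (X : ℕ → Ω → ℝ) (hX_min : ∀ t ω, Xmin ≤ X t ω)
    (μc Q : ℕ → Ω → ℝ) (s : ℕ → Ω → ℝ)
    (hμ0 : ∀ ω, 0 < μc 0 ω)
    (hμ_dyn : ∀ t ω, μc (t + 1) ω = μc t ω * X (t + 1) ω)
    (hQ0 : ∀ ω, Q 0 ω = 0)
    (hs : ∀ t ω, s (t + 1) ω = C * μc t ω - Q t ω / T)
    (hQ_dyn : ∀ t ω, Q (t + 1) ω = max (Q t ω + s (t + 1) ω * T - μc (t + 1) ω * T) 0) :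
    -- feasibility when Xmin < 1 and C ≤ Xmin/(1 − Xmin)
    ((Xmin < 1 → C ≤ Xmin / (1 - Xmin) → ∀ ω t, Q t ω ≤ T * C * μc t ω)
    -- feasibility for any C > 0 when Xmin ≥ 1
    ∧ (1 ≤ Xmin → ∀ ω t, Q t ω ≤ T * C * μc t ω)
    -- converse: the policy cannot always be followed
    ∧ (Xmin < 1 → Xmin / (1 - Xmin) < C →
        0 < P {ω | X 1 ω < C / (C + 1)} →
        0 < P {ω | ∃ t, T * C * μc t ω < Q t ω})) := by
  have hμpos : ∀ t ω, 0 < μc t ω := by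
    intro t
    induction t with
    | zero => exact hμ0
    | succ n ih =>
      intro ω
      rw [hμ_dyn]
      exact mul_pos (ih ω) (lt_of_lt_of_le hXmin (hX_min (n + 1) ω))
  -- the key recursion: Q(t+1) = max (T*C*μc t − T*μc(t+1)) 0
  have hQrec : ∀ t ω, Q (t + 1) ω = max (T * C * μc t ω - μc (t + 1) ω * T) 0 := by
    intro t ω
    rw [hQ_dyn, hs]
    have hq : Q t ω + (C * μc t ω - Q t ω / T) * T = T * C * μc t ω := by
      field_simp; ring
    rw [hq]
  -- feasibility from the bound Xmin ≥ C/(C+1) (in the form C ≤ (C+1)*Xmin)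
  have feas : C ≤ (C + 1) * Xmin → ∀ ω t, Q t ω ≤ T * C * μc t ω := by
    intro hkey ω t
    cases t with
    | zero =>
      rw [hQ0]
      exact le_of_lt (mul_pos (mul_pos hT hC) (hμ0 ω))
    | succ n =>
      rw [hQrec]
      apply max_le
      · have hx : C ≤ (C + 1) * X (n + 1) ω := by
          calc C ≤ (C + 1) * Xmin := hkey
          _ ≤ (C + 1) * X (n + 1) ω := by
            apply mul_le_mul_of_nonneg_left (hX_min (n + 1) ω)
            linarith
        rw [hμ_dyn]
        nlinarith [hμpos n ω, mul_pos hT (hμpos n ω)]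
      · exact le_of_lt (mul_pos (mul_pos hT hC) (hμpos (n + 1) ω))
  refine ⟨?_, ?_, ?_⟩
  · intro h1 hCle
    apply feas
    rw [le_div_iff₀ (by linarith)] at hCle
    nlinarith
  · intro h1
    apply feas
    nlinarith
  · intro _ _ hP
    refine lt_of_lt_of_le hP (measure_mono ?_)
    intro ω hω
    simp only [Set.mem_setOf_eq] at hω ⊢
    refine ⟨1, ?_⟩
    have hx0 : 0 < X 1 ω := lt_of_lt_of_le hXmin (hX_min 1 ω)
    have hxC : (C + 1) * X 1 ω < C := by
      rw [lt_div_iff₀ (by linarith : (0:ℝ) < C + 1)] at hω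
      linarith
    have hμ := hμpos 0 ω
    rw [hQrec 0 ω]
    refine lt_of_lt_of_le ?_ (le_max_left _ _)
    rw [hμ_dyn 0 ω]
    simp only [Nat.zero_add]
    nlinarith [mul_lt_mul_of_pos_left hxC (mul_pos hT hμ)]
end

section
/- (Deterministic induction step for achievability) Suppose Q(t−1) ≤ T·C·μ(t−1) and set s(t) = C·μ(t−1) − Q(t−1)/T ≥ 0. If μ(t) = μ(t−1)·x with x ≥ X_min > 0 and C ≤ X_min/(1 − X_min) (with X_min < 1), then Q(t) = (T·C·μ(t−1) − T·μ(t))⁺ ≤ T·C·μ(t). -/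
/-! With the arrival `s·T = T·C·μ(t−1) − Q(t−1)` the backlog cancels, so the new queue is
`(T·C·μ(t−1) − T·μ(t))⁺`. The bound `C ≤ X_min/(1 − X_min)` is `C ≤ (C + 1)·X_min`, hence
`C·μ(t−1) ≤ (C + 1)·μ(t)` whenever `μ(t) ≥ X_min·μ(t−1)`, which is the claimed inequality. -/

lemma add_sub_div_mul_sub_mul {T : ℝ} (hT : T ≠ 0) (Q a b : ℝ) :
    Q + (a - Q / T) * T - b * T = T * a - T * b := by
  field_simp
  ring

lemma le_add_one_mul_of_le_div_one_sub {C X x : ℝ} (hC : 0 ≤ C) (hX1 : X < 1) (hx : X ≤ x)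
    (hCX : C ≤ X / (1 - X)) : C ≤ (C + 1) * x := by
  have hCX' : C * (1 - X) ≤ X := (le_div_iff₀ (by linarith)).mp hCX
  calc C ≤ (C + 1) * X := by linarith
    _ ≤ (C + 1) * x := by gcongr

theorem stmt_7_general (T C μprev μ x Xmin Qprev s : ℝ)
    (hT : 0 < T) (hC : 0 < C) (hμprev : 0 < μprev)
    (hs : s = C * μprev - Qprev / T)
    (hμ : μ = μprev * x)
    (hXmin : 0 < Xmin) (hx : Xmin ≤ x) (hXmin1 : Xmin < 1)
    (hCbound : C ≤ Xmin / (1 - Xmin)) :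
    max (Qprev + s * T - μ * T) 0 = max (T * C * μprev - T * μ) 0
    ∧ max (T * C * μprev - T * μ) 0 ≤ T * C * μ := by
  refine ⟨?_, max_le ?_ ?_⟩
  · rw [hs, add_sub_div_mul_sub_mul hT.ne', mul_assoc]
  · have hgrowth : C * μprev ≤ (C + 1) * μ := by
      rw [hμ, mul_comm μprev, ← mul_assoc]
      exact mul_le_mul_of_nonneg_right
        (le_add_one_mul_of_le_div_one_sub hC.le hXmin1 hx hCbound) hμprev.le
    calc T * C * μprev - T * μ = T * (C * μprev) - T * μ := by ring
      _ ≤ T * ((C + 1) * μ) - T * μ := by gcongr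
      _ = T * C * μ := by ring
  · have hμpos : 0 < μ := hμ ▸ mul_pos hμprev (hXmin.trans_le hx)
    positivity

/-- Deterministic induction step for achievability: if
`Qprev ≤ T·C·μprev`, `s = C·μprev − Qprev/T ≥ 0`, `μ = μprev·x` with `x ≥ Xmin > 0`,
`Xmin < 1` and `C ≤ Xmin/(1 − Xmin)`, then
`Qnext = (T·C·μprev − T·μ)⁺ ≤ T·C·μ`. -/
theorem stmt_7 (T C μprev μ x Xmin Qprev s : ℝ)
    (hT : 0 < T) (hC : 0 < C) (hμprev : 0 < μprev)
    (hQprev_nonneg : 0 ≤ Qprev) (hQprev : Qprev ≤ T * C * μprev)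
    (hs : s = C * μprev - Qprev / T) (hs_nonneg : 0 ≤ s)
    (hμ : μ = μprev * x)
    (hXmin : 0 < Xmin) (hx : Xmin ≤ x) (hXmin1 : Xmin < 1)
    (hCbound : C ≤ Xmin / (1 - Xmin)) :
    max (Qprev + s * T - μ * T) 0 = max (T * C * μprev - T * μ) 0
    ∧ max (T * C * μprev - T * μ) 0 ≤ T * C * μ :=
  stmt_7_general T C μprev μ x Xmin Qprev s hT hC hμprev hs hμ hXmin hx hXmin1 hCbound
end

section
/- (Boundary characterization of the averaged convex set) Let (g_k)_{k∈S} be a finite family of differentiable convex functions on intervals of ℝ with strictly increasing derivatives, and let λ : S → (0,1] with Σ_k λ(k) = 1. Define the combined set D = {(Σ_k λ(k)x^k, Σ_k λ(k)y^k) : y^k ≥ g_k(x^k) ∀k}. A point (x, y) with x = Σ_k λ(k)x^k and y = Σ_k λ(k)g_k(x^k) lies on the lower boundary of D (i.e., minimizes the second coordinate among points of D with first coordinate x) if and only if g_i'(x^i) = g_j'(x^j) for all i, j ∈ S. -/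
/-!
If all slopes `g_k'(a_k)` equal a common `c`, the tangent lines `g_k(a_k) + c (x - a_k)` lie below
the `g_k`, and their `lam`-average does not change as long as `∑ lam_k x_k` stays fixed; so the
point is optimal. Conversely, moving weighted mass `t` from state `j` to state `i` keeps
`∑ lam_k x_k` fixed and changes the objective at rate `g_i'(a_i) - g_j'(a_j)` at `t = 0`, which
must vanish at a minimum.
-/

open Finset

lemma ConvexOn.add_mul_sub_le_of_hasDerivAt {s : Set ℝ} {f : ℝ → ℝ} {f' x y : ℝ}
    (hf : ConvexOn ℝ s f) (hx : x ∈ s) (hy : y ∈ s) (hf' : HasDerivAt f f' x) :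
    f x + f' * (y - x) ≤ f y := by
  rcases lt_trichotomy x y with hxy | rfl | hxy
  · have := hf.le_slope_of_hasDerivAt hx hy hxy hf'
    rw [slope_def_field, le_div_iff₀ (sub_pos.2 hxy)] at this
    linarith
  · simp
  · have := hf.slope_le_of_hasDerivAt hy hx hxy hf'
    rw [slope_def_field, div_le_iff₀ (sub_pos.2 hxy)] at this
    linarith

section WeightedSum

variable {ι : Type*} [Fintype ι] {g : ι → ℝ → ℝ} {lam a : ι → ℝ}

lemma sum_mul_apply_le_of_hasDerivAt_eq {c : ℝ} (hconv : ∀ k, ConvexOn ℝ Set.univ (g k))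
    (hderiv : ∀ k, HasDerivAt (g k) c (a k)) (hlam : ∀ k, 0 ≤ lam k) {x : ι → ℝ}
    (hx : ∑ k, lam k * x k = ∑ k, lam k * a k) :
    ∑ k, lam k * g k (a k) ≤ ∑ k, lam k * g k (x k) :=
  calc ∑ k, lam k * g k (a k)
      = ∑ k, lam k * (g k (a k) + c * (x k - a k)) := by
        simp only [mul_add, sum_add_distrib, mul_left_comm _ c, ← mul_sum,
          mul_sub, sum_sub_distrib, hx, sub_self, add_zero]
    _ ≤ ∑ k, lam k * g k (x k) := by
        gcongr with k
        · exact hlam k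
        · exact (hconv k).add_mul_sub_le_of_hasDerivAt trivial trivial (hderiv k)

lemma sum_mul_deriv_mul_eq_zero_of_forall_le {g' v : ι → ℝ}
    (hderiv : ∀ k, HasDerivAt (g k) (g' k) (a k))
    (hmin : ∀ x : ι → ℝ, ∑ k, lam k * x k = ∑ k, lam k * a k →
      ∑ k, lam k * g k (a k) ≤ ∑ k, lam k * g k (x k))
    (hv : ∑ k, lam k * v k = 0) :
    ∑ k, lam k * (g' k * v k) = 0 := by
  set φ : ℝ → ℝ := fun t ↦ ∑ k, lam k * g k (a k + t * v k)
  have hφ : HasDerivAt φ (∑ k, lam k * (g' k * v k)) 0 := by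
    refine HasDerivAt.fun_sum fun k _ ↦ HasDerivAt.const_mul _ ?_
    have hline : HasDerivAt (fun t : ℝ ↦ a k + t * v k) (v k) 0 := by
      simpa using ((hasDerivAt_id (0 : ℝ)).mul_const (v k)).const_add (a k)
    exact (hderiv k).comp_of_eq 0 hline (by simp)
  have hmin0 : IsMinOn φ Set.univ 0 := fun t _ ↦ by
    simpa [φ] using hmin (fun k ↦ a k + t * v k) (by
      simp [mul_add, sum_add_distrib, mul_left_comm _ t, ← mul_sum, hv])
  exact (hmin0.isLocalMin Filter.univ_mem).hasDerivAt_eq_zero hφ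

lemma eq_of_hasDerivAt_of_forall_le [DecidableEq ι] {g' : ι → ℝ}
    (hderiv : ∀ k, HasDerivAt (g k) (g' k) (a k)) (hlam : ∀ k, lam k ≠ 0)
    (hmin : ∀ x : ι → ℝ, ∑ k, lam k * x k = ∑ k, lam k * a k →
      ∑ k, lam k * g k (a k) ≤ ∑ k, lam k * g k (x k)) (i j : ι) :
    g' i = g' j := by
  -- moves weighted mass from coordinate `j` to coordinate `i`, keeping `∑ lam k * x k` fixed
  set v : ι → ℝ := Pi.single i (lam i)⁻¹ - Pi.single j (lam j)⁻¹
  have hv : ∑ k, lam k * v k = 0 := by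
    simp [v, mul_sub, sum_sub_distrib, Pi.single_apply, hlam]
  have := sum_mul_deriv_mul_eq_zero_of_forall_le hderiv hmin hv
  simp only [v, Pi.sub_apply, mul_sub, sum_sub_distrib, Pi.single_apply, mul_ite, mul_zero,
    sum_ite_eq', mem_univ, if_true] at this
  rwa [mul_left_comm, mul_inv_cancel₀ (hlam i), mul_left_comm, mul_inv_cancel₀ (hlam j), mul_one,
    mul_one, sub_eq_zero] at this

end WeightedSum

theorem stmt_12_general {S : Type*} [Fintype S]
    (g g' : S → ℝ → ℝ)
    (hconv : ∀ k, ConvexOn ℝ Set.univ (g k))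
    (hderiv : ∀ k x, HasDerivAt (g k) (g' k x) x)
    (lam : S → ℝ) (hlam_pos : ∀ k, 0 < lam k)
    (D : Set (ℝ × ℝ))
    (hD : D = {p : ℝ × ℝ | ∃ x y : S → ℝ, (∀ k, g k (x k) ≤ y k) ∧
      p.1 = ∑ k, lam k * x k ∧ p.2 = ∑ k, lam k * y k})
    (xdec : S → ℝ) :
    (∀ p ∈ D, p.1 = ∑ k, lam k * xdec k → ∑ k, lam k * g k (xdec k) ≤ p.2)
    ↔ (∀ i j : S, g' i (xdec i) = g' j (xdec j)) := by
  classical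
  subst hD
  constructor
  · intro hopt
    exact eq_of_hasDerivAt_of_forall_le (fun k ↦ hderiv k (xdec k)) (fun k ↦ (hlam_pos k).ne')
      fun x hx ↦ hopt (_, _) ⟨x, fun k ↦ g k (x k), fun _ ↦ le_rfl, rfl, rfl⟩ hx
  · rintro hslope ⟨_, _⟩ ⟨x, y, hgy, rfl, rfl⟩ hx
    obtain ⟨c, hc⟩ : ∃ c, ∀ k, g' k (xdec k) = c := by
      rcases isEmpty_or_nonempty S with _ | ⟨⟨k₀⟩⟩
      · exact ⟨0, isEmptyElim⟩
      · exact ⟨_, fun k ↦ hslope k k₀⟩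
    calc ∑ k, lam k * g k (xdec k) ≤ ∑ k, lam k * g k (x k) :=
          sum_mul_apply_le_of_hasDerivAt_eq hconv (fun k ↦ hc k ▸ hderiv k (xdec k))
            (fun k ↦ (hlam_pos k).le) hx
      _ ≤ ∑ k, lam k * y k := by
          gcongr with k
          · exact (hlam_pos k).le
          · exact hgy k

/-- Boundary characterization of the averaged convex set: for a finite
family of differentiable convex functions `g k` with strictly increasing derivatives
`g' k`, and a probability distribution `lam` on `S`, a point
`(∑ lam k · xdec k, ∑ lam k · g k (xdec k))` of the combined set `D` lies on the lower
boundary of `D` iff all the slopes `g' k (xdec k)` agree. -/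
theorem stmt_12 {S : Type*} [Fintype S] [Nonempty S]
    (g g' : S → ℝ → ℝ)
    (hconv : ∀ k, ConvexOn ℝ Set.univ (g k))
    (hderiv : ∀ k x, HasDerivAt (g k) (g' k x) x)
    (hstrict : ∀ k, StrictMono (g' k))
    (lam : S → ℝ) (hlam_pos : ∀ k, 0 < lam k) (hlam_sum : ∑ k, lam k = 1)
    (D : Set (ℝ × ℝ))
    (hD : D = {p : ℝ × ℝ | ∃ x y : S → ℝ, (∀ k, g k (x k) ≤ y k) ∧
      p.1 = ∑ k, lam k * x k ∧ p.2 = ∑ k, lam k * y k})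
    (xdec : S → ℝ) :
    (∀ p ∈ D, p.1 = ∑ k, lam k * xdec k → ∑ k, lam k * g k (xdec k) ≤ p.2)
    ↔ (∀ i j : S, g' i (xdec i) = g' j (xdec j)) :=
  stmt_12_general g g' hconv hderiv lam hlam_pos D hD xdec
end

section
/- (Convexity of the averaged set boundary) With the hypotheses of the equal-slopes characterization, the lower boundary function g^A of the set D = {(Σ_k λ(k)x^k, Σ_k λ(k)y^k) : y^k ≥ g_k(x^k)} is convex: if x₁ and x₂ are boundary abscissae with corresponding equal-slope decompositions, and the common slope at x₁ is less than the common slope at x₂, then x₁ < x₂, so the slope of g^A is increasing. -/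
open Finset

/-- Convexity of the averaged set boundary: with the equal-slopes
characterization in place, if two boundary abscissae have equal-slope decompositions
with common slopes `c₁ < c₂`, then the first abscissa is strictly smaller than the
second; hence the slope of the boundary `g^A` is increasing and `g^A` is convex. -/
theorem stmt_13 {S : Type*} [Fintype S] [Nonempty S]
    (g g' : S → ℝ → ℝ)
    (hconv : ∀ k, ConvexOn ℝ Set.univ (g k))
    (hderiv : ∀ k x, HasDerivAt (g k) (g' k x) x)
    (hstrict : ∀ k, StrictMono (g' k))
    (lam : S → ℝ) (hlam_pos : ∀ k, 0 < lam k) (hlam_sum : ∑ k, lam k = 1)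
    (x1dec x2dec : S → ℝ) (c1 c2 : ℝ)
    (h1 : ∀ k, g' k (x1dec k) = c1) (h2 : ∀ k, g' k (x2dec k) = c2)
    (hc : c1 < c2) :
    ∑ k, lam k * x1dec k < ∑ k, lam k * x2dec k := by
  apply Finset.sum_lt_sum_of_nonempty (Finset.univ_nonempty)
  intro k _
  have hx : x1dec k < x2dec k := by
    have := (hstrict k).lt_iff_lt (a := x1dec k) (b := x2dec k)
    rw [h1 k, h2 k] at this
    exact this.mp hc
  exact mul_lt_mul_of_pos_left hx (hlam_pos k)
end

section
/- (SMF achievability induction step) Suppose Q(t−1) ≤ T·C(k₁)·μ(t−1) where k₁ = S(t−1), and set s(t) = C(k₁)·μ(t−1) − Q(t−1)/T ≥ 0. If μ(t) = μ(t−1)·x with x ≥ X_min^{k₁} > 0, and the constants satisfy C(k₁)/X_min^{k₁} − 1 ≤ C(k₂) for all k₂ ∈ S, then Q(t) = (T·C(k₁)·μ(t−1) − T·μ(t))⁺ ≤ T·C(k₂)·μ(t) for every possible next state k₂ = S(t). -/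
/-! After the arrival `s(t)` the backlog is exactly `T·C(k₁)·μ(t-1)`, so the next queue is
`(T·C(k₁)·μ(t-1) − T·μ(t))⁺`. Since `μ(t) ≥ X_min·μ(t-1)`, the condition
`C(k₁)/X_min − 1 ≤ C(k₂)` gives `C(k₁)·μ(t-1) ≤ (C(k₂) + 1)·μ(t)`, which is the bound after
subtracting `μ(t)` and scaling by `T`. -/

lemma add_sub_div_mul_cancel {T : ℝ} (hT : T ≠ 0) (Q a : ℝ) : Q + (a - Q / T) * T = a * T := by
  field_simp
  ring

lemma mul_le_add_one_mul_mul_of_div_sub_one_le {a b X x m : ℝ} (ha : 0 ≤ a) (hX : 0 < X)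
    (hXx : X ≤ x) (hm : 0 ≤ m) (hab : a / X - 1 ≤ b) : a * m ≤ (b + 1) * (m * x) := by
  have hb : 0 ≤ b + 1 := by linarith [div_nonneg ha hX.le]
  have haX : a ≤ (b + 1) * X := (div_le_iff₀ hX).mp (by linarith)
  calc a * m ≤ (b + 1) * x * m := by gcongr; exact haX.trans (by gcongr)
    _ = (b + 1) * (m * x) := by ring

theorem stmt_14_general {S : Type*} (C Xmin : S → ℝ) (k₁ : S)
    (hC_pos : ∀ k, 0 < C k) (hXmin_pos : 0 < Xmin k₁)
    (T μprev μ x Qprev s : ℝ)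
    (hT : 0 < T) (hμprev : 0 < μprev)
    (hs : s = C k₁ * μprev - Qprev / T)
    (hμ : μ = μprev * x) (hx : Xmin k₁ ≤ x)
    (hCbound : ∀ k₂ : S, C k₁ / Xmin k₁ - 1 ≤ C k₂) :
    max (Qprev + s * T - μ * T) 0 = max (T * C k₁ * μprev - T * μ) 0
    ∧ ∀ k₂ : S, max (T * C k₁ * μprev - T * μ) 0 ≤ T * C k₂ * μ := by
  have hbacklog : Qprev + s * T = T * C k₁ * μprev := by
    rw [hs, add_sub_div_mul_cancel hT.ne']
    ring
  refine ⟨by rw [hbacklog, mul_comm μ], fun k₂ => ?_⟩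
  have hμ_pos : 0 < μ := hμ ▸ mul_pos hμprev (hXmin_pos.trans_le hx)
  have hcap : C k₁ * μprev ≤ (C k₂ + 1) * μ := hμ ▸
    mul_le_add_one_mul_mul_of_div_sub_one_le (hC_pos k₁).le hXmin_pos hx hμprev.le (hCbound k₂)
  refine max_le ?_ (by have := hC_pos k₂; positivity)
  calc T * C k₁ * μprev - T * μ = T * (C k₁ * μprev - μ) := by ring
    _ ≤ T * (C k₂ * μ) := by gcongr; linarith
    _ = T * C k₂ * μ := by ring

/-- SMF achievability induction step: if `Qprev ≤ T·C(k₁)·μprev`,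
`s = C(k₁)·μprev − Qprev/T ≥ 0`, `μ = μprev·x` with `x ≥ Xmin k₁ > 0`, and
`C(k₁)/Xmin(k₁) − 1 ≤ C(k₂)` for all `k₂`, then
`Qnext = (T·C(k₁)·μprev − T·μ)⁺ ≤ T·C(k₂)·μ` for every `k₂`. -/
theorem stmt_14 {S : Type*} (C Xmin : S → ℝ) (k₁ : S)
    (hC_pos : ∀ k, 0 < C k) (hXmin_pos : 0 < Xmin k₁)
    (T μprev μ x Qprev s : ℝ)
    (hT : 0 < T) (hμprev : 0 < μprev)
    (hQprev_nonneg : 0 ≤ Qprev) (hQprev : Qprev ≤ T * C k₁ * μprev)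
    (hs : s = C k₁ * μprev - Qprev / T) (hs_nonneg : 0 ≤ s)
    (hμ : μ = μprev * x) (hx : Xmin k₁ ≤ x)
    (hCbound : ∀ k₂ : S, C k₁ / Xmin k₁ - 1 ≤ C k₂) :
    max (Qprev + s * T - μ * T) 0 = max (T * C k₁ * μprev - T * μ) 0
    ∧ ∀ k₂ : S, max (T * C k₁ * μprev - T * μ) 0 ≤ T * C k₂ * μ :=
  stmt_14_general C Xmin k₁ hC_pos hXmin_pos T μprev μ x Qprev s hT hμprev hs hμ hx hCbound
end

section
/- (Global asymptotic stability of the optimal control law in continuous time) Consider the delay-differential equation ẋ(t) = −g(x(t−T)) where g(u) = min(u/T, 1) and T > 0. The function g is continuous, satisfies u·g(u) > 0 for all u ≠ 0 and α·u² > u·g(u) for any α > 1/T, and one may choose α ∈ (1/T, 3/(2T)) so that α·T < 3/2. Hence by Yorke's theorem on delay-differential equations, x(t) → 0 as t → ∞ for any initial condition. -/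
/-!
Every monotone `f` with `0 < u f(u) ≤ u² / T` for `u ≠ 0` makes the solutions of
`ẋ(t) = -f(x(t - T))` tend to `0`; `g` is such a function. A solution of eventually constant sign
is eventually monotone, and it cannot stay above `ε > 0` since its slope would then stay below
`-f(ε) < 0`. Otherwise `x` has arbitrarily late zeros. Let `z` be the last zero before `t`,
`x > 0` on `(z, t]` and `x ≥ -B` on `[z - 2T, z]`. Then `ẋ ≤ B / T` on `[z - T, z]`, so
`x(s - T) ≥ -B (z + T - s) / T` and `ẋ(s) ≤ B (z + T - s) / T²` for `s ∈ [z, z + T]`; integrating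
gives `x ≤ B / 2` there, and after `z + T` the solution decreases while positive. By the
symmetry `x ↦ -x`, `f ↦ -f(-·)`, an eventual bound `|x| ≤ B` therefore improves to `|x| ≤ B / 2`,
and the first bound `|x| ≤ K T` comes from `f ≤ K`.
-/

open Filter Set Topology

section Comparison

variable {x x' : ℝ → ℝ} {a b : ℝ}

theorem le_of_hasDerivAt_le_hasDerivAt {φ φ' : ℝ → ℝ} (hx : ∀ t, HasDerivAt x (x' t) t)
    (hφ : ∀ t, HasDerivAt φ (φ' t) t) (hab : a ≤ b) (ha : x a ≤ φ a)
    (hle : ∀ s ∈ Ico a b, x' s ≤ φ' s) : x b ≤ φ b :=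
  image_le_of_deriv_right_le_deriv_boundary
    (fun t _ => (hx t).continuousAt.continuousWithinAt) (fun t _ => (hx t).hasDerivWithinAt) ha
    (fun t _ => (hφ t).continuousAt.continuousWithinAt) (fun t _ => (hφ t).hasDerivWithinAt)
    hle ⟨hab, le_rfl⟩

theorem sub_le_mul_sub_of_hasDerivAt_le {C : ℝ} (hx : ∀ t, HasDerivAt x (x' t) t) (hab : a ≤ b)
    (hle : ∀ s ∈ Ico a b, x' s ≤ C) : x b - x a ≤ C * (b - a) := by
  have hφ : ∀ t, HasDerivAt (fun t => x a + C * (t - a)) C t := fun t => by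
    simpa using (((hasDerivAt_id t).sub_const a).const_mul C).const_add (x a)
  have := le_of_hasDerivAt_le_hasDerivAt hx hφ hab (by simp) hle
  linarith

end Comparison

theorem exists_last_zero {x : ℝ → ℝ} (hx : Continuous x) {a b : ℝ} (hab : a ≤ b) (ha : x a = 0)
    (hb : 0 < x b) : ∃ z ∈ Ico a b, x z = 0 ∧ ∀ s ∈ Ioc z b, 0 < x s := by
  set S := Icc a b ∩ x ⁻¹' {0}
  have hS : IsCompact S := isCompact_Icc.inter_right (isClosed_singleton.preimage hx)
  have hzS : sSup S ∈ S := hS.sSup_mem ⟨a, ⟨le_rfl, hab⟩, ha⟩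
  have hzb : sSup S ≠ b := fun h => by
    have : x (sSup S) = 0 := hzS.2
    rw [← h, this] at hb
    exact lt_irrefl 0 hb
  refine ⟨sSup S, ⟨hzS.1.1, lt_of_le_of_ne hzS.1.2 hzb⟩, hzS.2, fun s hs => ?_⟩
  by_contra! hxs
  obtain ⟨r, hr, hxr⟩ := intermediate_value_Icc hs.2 hx.continuousOn ⟨hxs, hb.le⟩
  have : r ≤ sSup S := le_csSup hS.bddAbove ⟨⟨by linarith [hzS.1.1, hs.1, hr.1], hr.2⟩, hxr⟩
  linarith [hs.1, hr.1]

theorem le_of_forall_last_zero_le {x : ℝ → ℝ} (hx : Continuous x) {Z t c : ℝ} (hc : 0 ≤ c)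
    (hZ : x Z = 0) (hZt : Z ≤ t)
    (h : ∀ z ∈ Ico Z t, x z = 0 → (∀ s ∈ Ioc z t, 0 < x s) → x t ≤ c) : x t ≤ c := by
  rcases le_or_gt (x t) 0 with hxt | hxt
  · linarith
  · obtain ⟨z, hz, hxz, hpos⟩ := exists_last_zero hx hZt hZ hxt
    exact h z hz hxz hpos

theorem eventually_pos_or_eventually_neg {x : ℝ → ℝ} (hx : Continuous x)
    (h : ∀ᶠ t in atTop, x t ≠ 0) : (∀ᶠ t in atTop, 0 < x t) ∨ ∀ᶠ t in atTop, x t < 0 := by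
  obtain ⟨t₀, ht₀⟩ := eventually_atTop.1 h
  have hsign : ∀ a ∈ Ici t₀, ∀ b ∈ Ici t₀, x a ≤ 0 → 0 ≤ x b → False := fun a ha b hb ha' hb' => by
    obtain ⟨c, hc, hxc⟩ := isPreconnected_Ici.intermediate_value ha hb hx.continuousOn ⟨ha', hb'⟩
    exact ht₀ c hc hxc
  rcases (ht₀ t₀ le_rfl).lt_or_gt with hneg | hpos
  · exact .inr <| eventually_atTop.2 ⟨t₀, fun t ht =>
      not_le.1 fun h' => hsign t₀ self_mem_Ici t ht hneg.le h'⟩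
  · exact .inl <| eventually_atTop.2 ⟨t₀, fun t ht =>
      not_le.1 fun h' => hsign t ht t₀ self_mem_Ici h' hpos.le⟩

def SolvesDelayEq (T : ℝ) (f x : ℝ → ℝ) : Prop :=
  ∀ t, HasDerivAt x (-f (x (t - T))) t

namespace SolvesDelayEq

variable {T : ℝ} {f x : ℝ → ℝ}

theorem continuous (hx : SolvesDelayEq T f x) : Continuous x :=
  continuous_iff_continuousAt.2 fun t => (hx t).continuousAt

theorem neg (hx : SolvesDelayEq T f x) : SolvesDelayEq T (fun u => -f (-u)) (fun t => -x t) :=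
  fun t => by simpa using (hx t).fun_neg

theorem le_of_delayed_nonneg (hx : SolvesDelayEq T f x) (hnn : ∀ u, 0 ≤ u → 0 ≤ f u) {a b : ℝ}
    (hab : a ≤ b) (h : ∀ s ∈ Icc (a - T) (b - T), 0 ≤ x s) : x b ≤ x a := by
  have := sub_le_mul_sub_of_hasDerivAt_le (C := 0) hx hab fun s hs =>
    neg_nonpos.2 (hnn _ (h _ ⟨by linarith [hs.1], by linarith [hs.2]⟩))
  linarith

theorem le_of_last_zero (hT : 0 ≤ T) (hx : SolvesDelayEq T f x) (hnn : ∀ u, 0 ≤ u → 0 ≤ f u)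
    {z t : ℝ} (hz : x z = 0) (hpos : ∀ s ∈ Ioc z t, 0 < x s) (ht : z + T ≤ t) :
    x t ≤ x (z + T) :=
  hx.le_of_delayed_nonneg hnn ht fun s hs => by
    rcases (show z ≤ s by linarith [hs.1]).eq_or_lt with rfl | hzs
    · exact hz.ge
    · exact (hpos s ⟨hzs, by linarith [hs.2]⟩).le

theorem le_mul_of_last_zero (hT : 0 ≤ T) (hx : SolvesDelayEq T f x) {K : ℝ} (hK0 : 0 ≤ K)
    (hK : ∀ u, -K ≤ f u) (hnn : ∀ u, 0 ≤ u → 0 ≤ f u) {z t : ℝ} (hz : x z = 0) (hzt : z ≤ t)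
    (hpos : ∀ s ∈ Ioc z t, 0 < x s) : x t ≤ K * T := by
  have hearly : ∀ t' ∈ Icc z (z + T), x t' ≤ K * T := fun t' ht' => by
    have := sub_le_mul_sub_of_hasDerivAt_le hx ht'.1 fun s _ => neg_le.1 (hK _)
    nlinarith [ht'.2]
  rcases le_or_gt t (z + T) with ht | ht
  · exact hearly t ⟨hzt, ht⟩
  · exact (hx.le_of_last_zero hT hnn hz hpos ht.le).trans (hearly _ ⟨by linarith, le_rfl⟩)

theorem le_half_of_last_zero (hT : 0 < T) (hx : SolvesDelayEq T f x) (hf : Monotone f)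
    (hdiv : ∀ u, u ≤ 0 → u / T ≤ f u) (hnn : ∀ u, 0 ≤ u → 0 ≤ f u) {B z t : ℝ}
    (hlow : ∀ s ∈ Icc (z - 2 * T) z, -B ≤ x s) (hz : x z = 0) (hzt : z ≤ t)
    (hpos : ∀ s ∈ Ioc z t, 0 < x s) : x t ≤ B / 2 := by
  have hB : 0 ≤ B := by linarith [hlow z ⟨by linarith, le_rfl⟩]
  have hnear : ∀ r ∈ Icc (z - T) z, -(B / T) * (z - r) ≤ x r := fun r hr => by
    have := sub_le_mul_sub_of_hasDerivAt_le (C := B / T) hx hr.2 fun s hs => by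
      have := hf (hlow (s - T) ⟨by linarith [hr.1, hs.1], by linarith [hs.2]⟩)
      linarith [hdiv (-B) (by linarith), neg_div T B]
    linarith
  have hrate : ∀ s ∈ Icc z (z + T), -f (x (s - T)) ≤ B * (z + T - s) / T ^ 2 := fun s hs => by
    have hv : -(B / T) * (z - (s - T)) ≤ 0 :=
      mul_nonpos_of_nonpos_of_nonneg (by have := div_nonneg hB hT.le; linarith) (by linarith [hs.2])
    have := hf (hnear (s - T) ⟨by linarith [hs.1], by linarith [hs.2]⟩)
    have hval : -(B / T) * (z - (s - T)) / T = -(B * (z + T - s) / T ^ 2) := by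
      field_simp
      ring
    linarith [hdiv _ hv]
  have hΦ : ∀ s, HasDerivAt (fun s => B * (T ^ 2 - (z + T - s) ^ 2) / (2 * T ^ 2))
      (B * (z + T - s) / T ^ 2) s := fun s => by
    refine (((((hasDerivAt_id s).const_sub (z + T)).fun_pow 2).const_sub (T ^ 2)).const_mul B
      |>.div_const (2 * T ^ 2)).congr_deriv ?_
    simp only [id, Nat.cast_ofNat]
    field_simp
    ring
  have hearly : ∀ t' ∈ Icc z (z + T), x t' ≤ B / 2 := fun t' ht' => by
    calc x t' ≤ B * (T ^ 2 - (z + T - t') ^ 2) / (2 * T ^ 2) :=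
          le_of_hasDerivAt_le_hasDerivAt hx hΦ ht'.1 (by simp [hz])
            fun s hs => hrate s ⟨hs.1, hs.2.le.trans ht'.2⟩
      _ ≤ B * T ^ 2 / (2 * T ^ 2) := by
          gcongr
          exact sub_le_self _ (sq_nonneg _)
      _ = B / 2 := by field_simp
  rcases le_or_gt t (z + T) with ht | ht
  · exact hearly t ⟨hzt, ht⟩
  · exact (hx.le_of_last_zero hT.le hnn hz hpos ht.le).trans (hearly _ ⟨by linarith, le_rfl⟩)

theorem eventually_le_mul (hT : 0 ≤ T) (hx : SolvesDelayEq T f x) {K : ℝ} (hK0 : 0 ≤ K)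
    (hK : ∀ u, -K ≤ f u) (hnn : ∀ u, 0 ≤ u → 0 ≤ f u) (hfreq : ∃ᶠ t in atTop, x t = 0) :
    ∀ᶠ t in atTop, x t ≤ K * T := by
  obtain ⟨Z, -, hZ⟩ := frequently_atTop.1 hfreq 0
  exact eventually_atTop.2 ⟨Z, fun t ht => le_of_forall_last_zero_le hx.continuous
    (mul_nonneg hK0 hT) hZ ht fun z hz hxz hpos =>
      hx.le_mul_of_last_zero hT hK0 hK hnn hxz hz.2.le hpos⟩

theorem eventually_le_half (hT : 0 < T) (hx : SolvesDelayEq T f x) (hf : Monotone f)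
    (hdiv : ∀ u, u ≤ 0 → u / T ≤ f u) (hnn : ∀ u, 0 ≤ u → 0 ≤ f u)
    (hfreq : ∃ᶠ t in atTop, x t = 0) {B : ℝ} (hB : ∀ᶠ t in atTop, -B ≤ x t) :
    ∀ᶠ t in atTop, x t ≤ B / 2 := by
  obtain ⟨t₀, ht₀⟩ := eventually_atTop.1 hB
  obtain ⟨Z, hZt₀, hZ⟩ := frequently_atTop.1 hfreq (t₀ + 2 * T)
  have hB0 : 0 ≤ B := by linarith [ht₀ Z (by linarith)]
  exact eventually_atTop.2 ⟨Z, fun t ht => le_of_forall_last_zero_le hx.continuous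
    (by positivity) hZ ht fun z hz hxz hpos =>
      hx.le_half_of_last_zero hT hf hdiv hnn (fun s hs => ht₀ s (by linarith [hs.1, hz.1]))
        hxz hz.2.le hpos⟩

theorem tendsto_zero_of_eventually_pos (hT : 0 ≤ T) (hx : SolvesDelayEq T f x)
    (hf : Monotone f) (hpos : ∀ u, 0 < u → 0 < f u) (hx0 : ∀ᶠ t in atTop, 0 < x t) :
    Tendsto x atTop (𝓝 0) := by
  obtain ⟨t₀, ht₀⟩ := eventually_atTop.1 hx0
  have hanti : ∀ a b, t₀ + T ≤ a → a ≤ b → x b ≤ x a := fun a b ha hab => by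
    have := sub_le_mul_sub_of_hasDerivAt_le (C := 0) hx hab fun s hs =>
      neg_nonpos.2 (hpos _ (ht₀ _ (by linarith [hs.1]))).le
    linarith
  have hsmall : ∀ ε > 0, ∃ t₁ ≥ t₀ + T, x t₁ < ε := fun ε hε => by
    by_contra! hlarge
    set a := t₀ + 2 * T
    have hc := hpos ε hε
    have hxa := ht₀ a (by linarith)
    have hstep : a ≤ a + x a / f ε := le_add_of_nonneg_right (by positivity)
    have := sub_le_mul_sub_of_hasDerivAt_le (C := -f ε) hx hstep fun s hs =>
      neg_le_neg (hf (hlarge _ (by linarith [hs.1])))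
    have hend := ht₀ (a + x a / f ε) (by linarith)
    have hdrop : -f ε * (a + x a / f ε - a) = -x a := by field_simp; ring
    linarith
  refine Metric.tendsto_atTop.2 fun ε hε => ?_
  obtain ⟨t₁, ht₁, hxt₁⟩ := hsmall ε hε
  refine ⟨t₁, fun t ht => ?_⟩
  rw [Real.dist_eq, sub_zero, abs_of_pos (ht₀ t (by linarith))]
  exact (hanti t₁ t ht₁ ht).trans_lt hxt₁

end SolvesDelayEq

structure IsMonotoneSector (T : ℝ) (f : ℝ → ℝ) : Prop where
  monotone : Monotone f
  pos : ∀ u, 0 < u → 0 < f u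
  neg : ∀ u, u < 0 → f u < 0
  le_div : ∀ u, 0 ≤ u → f u ≤ u / T
  div_le : ∀ u, u ≤ 0 → u / T ≤ f u

namespace IsMonotoneSector

variable {T : ℝ} {f : ℝ → ℝ}

theorem map_zero (hf : IsMonotoneSector T f) : f 0 = 0 :=
  le_antisymm (by simpa using hf.le_div 0 le_rfl) (by simpa using hf.div_le 0 le_rfl)

theorem nonneg (hf : IsMonotoneSector T f) {u : ℝ} (hu : 0 ≤ u) : 0 ≤ f u :=
  hf.map_zero ▸ hf.monotone hu

theorem reflect (hf : IsMonotoneSector T f) : IsMonotoneSector T (fun u => -f (-u)) where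
  monotone _ _ h := neg_le_neg (hf.monotone (neg_le_neg h))
  pos u hu := neg_pos.2 (hf.neg _ (neg_lt_zero.2 hu))
  neg u hu := neg_lt_zero.2 (hf.pos _ (neg_pos.2 hu))
  le_div u hu := by linarith [hf.div_le (-u) (by linarith), neg_div T u]
  div_le u hu := by linarith [hf.le_div (-u) (by linarith), neg_div T u]

theorem mul_pos (hf : IsMonotoneSector T f) {u : ℝ} (hu : u ≠ 0) : 0 < u * f u := by
  rcases hu.lt_or_gt with h | h
  · exact mul_pos_of_neg_of_neg h (hf.neg u h)
  · exact _root_.mul_pos h (hf.pos u h)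

theorem mul_le_sq_div (hf : IsMonotoneSector T f) (u : ℝ) : u * f u ≤ u ^ 2 / T := by
  rw [sq, mul_div_assoc]
  rcases le_total 0 u with h | h
  · exact mul_le_mul_of_nonneg_left (hf.le_div u h) h
  · exact mul_le_mul_of_nonpos_left (hf.div_le u h) h

variable {x : ℝ → ℝ}

theorem tendsto_zero_of_frequently_zero (hT : 0 < T) (hf : IsMonotoneSector T f) {K : ℝ}
    (hK : ∀ u, f u ≤ K) (hx : SolvesDelayEq T f x) (hfreq : ∃ᶠ t in atTop, x t = 0) :
    Tendsto x atTop (𝓝 0) := by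
  have hfreq' : ∃ᶠ t in atTop, -x t = 0 := hfreq.mono fun t ht => by simp [ht]
  have hhalf : ∀ B, (∀ᶠ t in atTop, |x t| ≤ B) → ∀ᶠ t in atTop, |x t| ≤ B / 2 := fun B hB => by
    have hup := hx.eventually_le_half hT hf.monotone hf.div_le (fun _ => hf.nonneg) hfreq
      (hB.mono fun t ht => (abs_le.1 ht).1)
    have hlow := hx.neg.eventually_le_half hT hf.reflect.monotone hf.reflect.div_le
      (fun _ => hf.reflect.nonneg) hfreq' (hB.mono fun t ht => by linarith [(abs_le.1 ht).2])
    filter_upwards [hup, hlow] with t hup hlow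
    exact abs_le.2 ⟨by linarith, hup⟩
  have hK0 : 0 ≤ K := hf.map_zero ▸ hK 0
  have hKT : 0 ≤ K * T := mul_nonneg hK0 hT.le
  have hinit : ∀ᶠ t in atTop, |x t| ≤ K * T := by
    have hlow := hx.neg.eventually_le_mul hT.le hK0 (fun u => neg_le_neg (hK _))
      (fun _ => hf.reflect.nonneg) hfreq'
    have hup := hx.eventually_le_half (B := K * T) hT hf.monotone hf.div_le (fun _ => hf.nonneg)
      hfreq (hlow.mono fun t ht => by linarith)
    filter_upwards [hup, hlow] with t hup hlow
    exact abs_le.2 ⟨by linarith, by linarith⟩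
  have hpow : ∀ n : ℕ, ∀ᶠ t in atTop, |x t| ≤ K * T * (1 / 2) ^ n := by
    intro n
    induction n with
    | zero => simpa using hinit
    | succ n ih => exact (hhalf _ ih).mono fun t ht => by rw [pow_succ]; linarith
  have hlim : Tendsto (fun n : ℕ => K * T * (1 / 2 : ℝ) ^ n) atTop (𝓝 0) := by
    have := (tendsto_pow_atTop_nhds_zero_of_lt_one (by norm_num)
      (by norm_num : (1 / 2 : ℝ) < 1)).const_mul (K * T)
    rwa [mul_zero] at this
  refine Metric.tendsto_nhds.2 fun ε hε => ?_
  obtain ⟨n, hn⟩ := (hlim.eventually (gt_mem_nhds hε)).exists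
  filter_upwards [hpow n] with t ht
  rw [Real.dist_eq, sub_zero]
  exact ht.trans_lt hn

theorem tendsto_zero (hT : 0 < T) (hf : IsMonotoneSector T f) {K : ℝ} (hK : ∀ u, f u ≤ K)
    (hx : SolvesDelayEq T f x) : Tendsto x atTop (𝓝 0) := by
  by_cases hfreq : ∃ᶠ t in atTop, x t = 0
  · exact hf.tendsto_zero_of_frequently_zero hT hK hx hfreq
  rcases eventually_pos_or_eventually_neg hx.continuous (not_frequently.1 hfreq) with hpos | hneg
  · exact hx.tendsto_zero_of_eventually_pos hT.le hf.monotone hf.pos hpos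
  · simpa using (hx.neg.tendsto_zero_of_eventually_pos hT.le hf.reflect.monotone hf.reflect.pos
      (hneg.mono fun t ht => neg_pos.2 ht)).neg

end IsMonotoneSector

theorem isMonotoneSector_min_div_one {T : ℝ} (hT : 0 < T) :
    IsMonotoneSector T (fun u => min (u / T) 1) where
  monotone _ _ h := min_le_min_right 1 (div_le_div_of_nonneg_right h hT.le)
  pos _ hu := lt_min (div_pos hu hT) one_pos
  neg _ hu := (min_le_left _ _).trans_lt (div_neg_of_neg_of_pos hu hT)
  le_div _ _ := min_le_left _ _
  div_le _ hu := le_min le_rfl ((div_nonpos_of_nonpos_of_nonneg hu hT.le).trans zero_le_one)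

/-- Global asymptotic stability in continuous time: for
`g(u) = min(u/T, 1)` with `T > 0`, the function `g` is continuous, satisfies the
sector condition `0 < u·g(u) < α·u²` for all `u ≠ 0` whenever `α > 1/T`, and one may
choose `α ∈ (1/T, 3/(2T))` so that `α·T < 3/2`; hence (Yorke) every solution of the
delay-differential equation `ẋ(t) = −g(x(t−T))` tends to `0` as `t → ∞`. -/
theorem stmt_15 (T : ℝ) (hT : 0 < T) (g : ℝ → ℝ)
    (hg : ∀ u, g u = min (u / T) 1) :
    Continuous g
    ∧ (∀ u : ℝ, u ≠ 0 → 0 < u * g u)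
    ∧ (∀ α : ℝ, 1 / T < α → ∀ u : ℝ, u ≠ 0 → u * g u < α * u ^ 2)
    ∧ (∃ α : ℝ, 1 / T < α ∧ α < 3 / (2 * T) ∧ α * T < 3 / 2)
    ∧ (∀ x : ℝ → ℝ, (∀ t : ℝ, HasDerivAt x (-g (x (t - T))) t) →
        Tendsto x atTop (nhds 0)) := by
  obtain rfl : g = fun u => min (u / T) 1 := funext hg
  have hg := isMonotoneSector_min_div_one hT
  refine ⟨(continuous_id.div_const T).min continuous_const, fun u hu => hg.mul_pos hu,
    fun α hα u hu => ?_, ⟨5 / (4 * T), ?_, ?_, ?_⟩,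
    fun x hx => hg.tendsto_zero hT (fun _ => min_le_right _ _) hx⟩
  · calc u * min (u / T) 1 ≤ u ^ 2 / T := hg.mul_le_sq_div u
      _ = 1 / T * u ^ 2 := by ring
      _ < α * u ^ 2 := by gcongr
  · rw [div_lt_div_iff₀ hT (by positivity)]
    linarith
  · rw [div_lt_div_iff₀ (by positivity) (by positivity)]
    linarith
  · rw [div_mul_eq_mul_div, div_lt_iff₀ (by positivity)]
    linarith
end

section
/- (Prediction-normalized queue recursion) Under PMIF dynamics μ(t) = Pred(t−1)·X_t^p and Pred(t) = Pred(t−1)·X_t^{pred} with positive factors, if the sender sets s(t) so that ρ^p(t) = (Q(t−1)/T + s(t))/Pred(t−1) equals some value ρ, then the normalized queue satisfies Q(t)/Pred(t) = T·(ρ/X_t^p − 1)⁺·(X_t^p / X_t^{pred}). -/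
/-- Prediction-normalized queue recursion: under PMIF dynamics
`μ = PredPrev·Xp`, `Pred = PredPrev·Xpred`, if the sender chooses `s` so that the
prediction-relative load `(Qprev/T + s)/PredPrev` equals `ρ`, then
`Qnext/Pred = T·(ρ/Xp − 1)⁺·(Xp/Xpred)`. -/
theorem stmt_18 (T PredPrev Pred Xp Xpred s Qprev ρ μ Qnext : ℝ)
    (hT : 0 < T) (hPredPrev : 0 < PredPrev) (hXp : 0 < Xp) (hXpred : 0 < Xpred)
    (hs : 0 ≤ s) (hQprev : 0 ≤ Qprev)
    (hμ : μ = PredPrev * Xp)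
    (hPred : Pred = PredPrev * Xpred)
    (hρ : (Qprev / T + s) / PredPrev = ρ)
    (hQnext : Qnext = max (Qprev + s * T - μ * T) 0) :
    Qnext / Pred = T * max (ρ / Xp - 1) 0 * (Xp / Xpred) := by
  have h1 : Qprev + s * T = T * ρ * PredPrev := by
    field_simp at hρ
    nlinarith [hρ]
  subst hμ hPred hQnext
  rcases le_total ρ Xp with h | h
  · rw [max_eq_right, max_eq_right]
    · simp
    · have : ρ / Xp ≤ 1 := (div_le_one hXp).mpr h
      linarith
    · nlinarith [mul_le_mul_of_nonneg_left h (mul_pos hT hPredPrev).le]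
  · rw [max_eq_left, max_eq_left]
    · rw [h1]; field_simp
    · have : 1 ≤ ρ / Xp := (one_le_div hXp).mpr h
      linarith
    · nlinarith [mul_le_mul_of_nonneg_left h (mul_pos hT hPredPrev).le]
end
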